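/- arXiv:2504.21127 — 5 statements merged into one kernel-verified Lean document; each statement's English description precedes it below -/
import Mathlib

section
/- For every integer p ≥ 1, every finite graph G with χ(G) > p has an induced subgraph F with minimum degree at least p and χ(F) ≥ χ(G) − p. -/
open SimpleGraph

/-- The chromatic number of the subgraph of `G` induced on `S`, as a natural number. -/
noncomputable def chiSet {V : Type*} (G : SimpleGraph V) (S : Set V) : ℕ :=
  (G.induce S).chromaticNumber.toNat

/-- The chromatic number of `G`, as a natural number. -/
noncomputable def chi {V : Type*} (G : SimpleGraph V) : ℕ :=
  G.chromaticNumber.toNat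

/-- `(A, B)` is an anticomplete pair: no edge of `G` joins `A` and `B`. -/
def Anticomplete {V : Type*} (G : SimpleGraph V) (A B : Set V) : Prop :=
  ∀ a ∈ A, ∀ b ∈ B, ¬ G.Adj a b

/-- `G` is `H`-free: no induced subgraph of `G` is isomorphic to `H`. -/
def FreeOf {V W : Type*} (G : SimpleGraph V) (H : SimpleGraph W) : Prop :=
  IsEmpty (H ↪g G)

/-!
Take a vertex set `S` minimal subject to `χ(G[S]) ≥ χ(G)`. Deleting any vertex `u` of `S` lowers
the chromatic number, and a `(χ(G) - 1)`-colouring of `G[S - u]` extends greedily to `u` unless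
`u` has at least `χ(G) - 1 ≥ p` neighbours in `S`. So `G[S]` has minimum degree at least `p` and
chromatic number `χ(G)`.
-/

open Set.Notation in
theorem SimpleGraph.Colorable.induce_insert {V : Type*} {G : SimpleGraph V} {s : Set V} {u : V}
    {n : ℕ} (hs : (G.induce s).Colorable n) (hu : (G.neighborSet u ∩ s).encard < n) :
    (G.induce (insert u s)).Colorable n := by
  obtain ⟨C⟩ := hs
  have hused : (C '' (s ↓∩ G.neighborSet u)).encard < n := calc
    _ ≤ (s ↓∩ G.neighborSet u).encard := Set.encard_image_le _ _
    _ = (G.neighborSet u ∩ s).encard := by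
      rw [← Subtype.val_injective.encard_image, Subtype.image_preimage_coe, Set.inter_comm]
    _ < n := hu
  obtain ⟨c, hc⟩ : ∃ c, c ∉ C '' (s ↓∩ G.neighborSet u) := by
    rw [← Set.ne_univ_iff_exists_notMem]
    intro h
    simp [h] at hused
  classical
  refine ⟨Coloring.mk (fun v => if h : v.1 = u then c else C ⟨v, v.2.resolve_left h⟩) ?_⟩
  rintro ⟨a, ha⟩ ⟨b, hb⟩ (hab : G.Adj a b)
  by_cases hau : a = u <;> by_cases hbu : b = u
  · exact absurd (hau ▸ hbu ▸ hab) G.irrefl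
  · subst hau
    simp only [dif_pos, dif_neg hbu]
    exact fun h => hc ⟨⟨b, hb.resolve_left hbu⟩, hab, h.symm⟩
  · subst hbu
    simp only [dif_pos, dif_neg hau]
    exact fun h => hc ⟨⟨a, ha.resolve_left hau⟩, hab.symm, h⟩
  · simp only [dif_neg hau, dif_neg hbu]
    exact C.valid hab

section

variable {V : Type*} {G : SimpleGraph V}

theorem chiSet_le_iff_colorable [Finite V] {s : Set V} {n : ℕ} :
    chiSet G s ≤ n ↔ (G.induce s).Colorable n :=
  ⟨fun h => (colorable_chromaticNumber_of_fintype _).mono h,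
    fun h => ENat.toNat_le_of_le_natCast h.chromaticNumber_le⟩

theorem chiSet_univ : chiSet G Set.univ = chi G := by
  rw [chiSet, chi, chromaticNumber_congr G.induceUnivIso]

theorem sub_one_le_ncard_neighborSet_inter_of_minimal [Finite V] {k : ℕ} {s : Set V}
    (hs : Minimal (fun t => k ≤ chiSet G t) s) {u : V} (hu : u ∈ s) :
    k - 1 ≤ (G.neighborSet u ∩ s).ncard := by
  by_contra! hdeg
  have hdel : (G.induce (s \ {u})).Colorable (k - 1) := by
    rw [← chiSet_le_iff_colorable]
    have := hs.not_prop_of_lt (Set.sdiff_singleton_ssubset.mpr hu)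
    omega
  have hcol : (G.induce s).Colorable (k - 1) := by
    rw [← Set.insert_sdiff_self_of_mem hu]
    refine hdel.induce_insert ?_
    calc (G.neighborSet u ∩ (s \ {u})).encard
        ≤ (G.neighborSet u ∩ s).encard :=
          Set.encard_le_encard (Set.inter_subset_inter_right _ Set.sdiff_subset)
      _ = (G.neighborSet u ∩ s).ncard := (Set.toFinite _).cast_ncard_eq.symm
      _ < (k - 1 : ℕ) := by exact_mod_cast hdeg
  have := chiSet_le_iff_colorable.mpr hcol
  have := hs.prop
  omega

end

theorem stmt_1_general {V : Type*} [Fintype V] (G : SimpleGraph V) (p : ℕ)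
    (hchi : p < chi G) :
    ∃ S : Set V, (∀ u ∈ S, p ≤ (G.neighborSet u ∩ S).ncard) ∧
      chi G - p ≤ chiSet G S := by
  obtain ⟨S, -, hS⟩ :=
    exists_minimal_le_of_wellFoundedLT (fun t => chi G ≤ chiSet G t) Set.univ chiSet_univ.ge
  refine ⟨S, fun u hu => ?_, (Nat.sub_le _ _).trans hS.prop⟩
  have := sub_one_le_ncard_neighborSet_inter_of_minimal hS hu
  omega

/-- For every integer `p ≥ 1`, every finite graph `G` with `χ(G) > p` has an
induced subgraph `F = G[S]` with minimum degree at least `p` and `χ(F) ≥ χ(G) − p`. -/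
theorem stmt_1 {V : Type*} [Fintype V] (G : SimpleGraph V) (p : ℕ) (hp : 1 ≤ p)
    (hchi : p < chi G) :
    ∃ S : Set V, (∀ u ∈ S, p ≤ (G.neighborSet u ∩ S).ncard) ∧
      chi G - p ≤ chiSet G S :=
  stmt_1_general G p hchi
end

section
/- Let G be a graph with clique number at most w ≥ 2, and let (B_1,…,B_k) be a blockade in G that is w^{-1}-vivid, meaning: for all i < j in [k] and every v ∈ B_j, χ(B_i \ N_G(v)) < w^{-1}·χ(B_i), where each B_i is nonempty. Then k ≤ w. -/
open SimpleGraph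

/-!
Suppose `k ≥ w + 1`. Walking down the blocks `B_{k-1}, B_{k-2}, …`, we grow a clique with one
vertex in each block. If `T` is the clique built so far (`|T| ≤ w`, all of it in later blocks),
then `B_j` cannot be covered by the non-neighbourhoods `B_j \ N(v)`, `v ∈ T`: by subadditivity of
`χ` this would give `w χ(B_j) ≤ ∑_{v ∈ T} w χ(B_j \ N(v)) < |T| χ(B_j) ≤ w χ(B_j)`. Hence some vertex
of `B_j` is complete to `T`, and after `w + 1` steps we obtain a clique of size `w + 1`.
-/

namespace SimpleGraph

section chiSet

variable {V : Type*} [Finite V] (G : SimpleGraph V)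

lemma colorable_chiSet (S : Set V) : (G.induce S).Colorable (chiSet G S) :=
  colorable_chromaticNumber_of_fintype _

lemma chiSet_le_iff {S : Set V} {n : ℕ} : chiSet G S ≤ n ↔ (G.induce S).Colorable n :=
  ⟨fun h ↦ (colorable_chiSet G S).mono h, fun h ↦ by
    simpa [chiSet] using ENat.toNat_le_toNat h.chromaticNumber_le (by simp)⟩

lemma chiSet_mono {S T : Set V} (h : S ⊆ T) : chiSet G S ≤ chiSet G T :=
  (chiSet_le_iff G).mpr ((colorable_chiSet G T).of_hom (G.induceHomOfLE h).toHom)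

@[simp]
lemma chiSet_empty : chiSet G ∅ = 0 :=
  Nat.le_zero.mp <| (chiSet_le_iff G).mpr (.of_isEmpty 0)

lemma chiSet_union_le (A C : Set V) : chiSet G (A ∪ C) ≤ chiSet G A + chiSet G C := by
  classical
  obtain ⟨cA⟩ := colorable_chiSet G A
  obtain ⟨cC⟩ := colorable_chiSet G C
  let c : (G.induce (A ∪ C)).Coloring (Fin (chiSet G A) ⊕ Fin (chiSet G C)) :=
    Coloring.mk
      (fun v ↦ if h : (v : V) ∈ A then .inl (cA ⟨v, h⟩) else .inr (cC ⟨v, v.2.resolve_left h⟩))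
      (by
        rintro ⟨u, hu⟩ ⟨v, hv⟩ (huv : G.Adj u v)
        by_cases huA : u ∈ A <;> by_cases hvA : v ∈ A <;> simp only [huA, hvA, dite_true,
          dite_false, ne_eq, reduceCtorEq, not_false_eq_true, Sum.inl.injEq, Sum.inr.injEq]
        · exact cA.valid (show (G.induce A).Adj ⟨u, huA⟩ ⟨v, hvA⟩ from huv)
        · exact cC.valid
            (show (G.induce C).Adj ⟨u, hu.resolve_left huA⟩ ⟨v, hv.resolve_left hvA⟩ from huv))
  rw [chiSet_le_iff]
  simpa using c.colorable

lemma chiSet_biUnion_le {ι : Type*} (s : Finset ι) (D : ι → Set V) :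
    chiSet G (⋃ i ∈ s, D i) ≤ ∑ i ∈ s, chiSet G (D i) := by
  classical
  induction s using Finset.induction_on with
  | empty => simp
  | insert a s ha ih =>
    rw [Finset.set_biUnion_insert, Finset.sum_insert ha]
    exact (chiSet_union_le G _ _).trans (Nat.add_le_add_left ih _)

end chiSet

variable {V : Type*} [Finite V] {G : SimpleGraph V}

lemma exists_forall_adj_of_mul_chiSet_lt {w : ℕ} {B : Set V} {T : Finset V} (hB : B.Nonempty)
    (hT : T.card ≤ w) (hsparse : ∀ v ∈ T, w * chiSet G (B \ G.neighborSet v) < chiSet G B) :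
    ∃ x ∈ B, ∀ v ∈ T, G.Adj v x := by
  by_contra! hnone
  have hcover : B ⊆ ⋃ v ∈ T, B \ G.neighborSet v := fun x hx ↦ by
    obtain ⟨v, hv, hnadj⟩ := hnone x hx
    exact Set.mem_biUnion hv ⟨hx, hnadj⟩
  have hTne : T.Nonempty := by
    obtain ⟨x, hx⟩ := hB
    obtain ⟨v, hv, -⟩ := hnone x hx
    exact ⟨v, hv⟩
  have := calc
    w * chiSet G B ≤ w * ∑ v ∈ T, chiSet G (B \ G.neighborSet v) :=
      Nat.mul_le_mul_left w ((chiSet_mono G hcover).trans (chiSet_biUnion_le G T _))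
    _ = ∑ v ∈ T, w * chiSet G (B \ G.neighborSet v) := Finset.mul_sum _ _ _
    _ < ∑ _v ∈ T, chiSet G B := Finset.sum_lt_sum_of_nonempty hTne hsparse
    _ = T.card * chiSet G B := by rw [Finset.sum_const, smul_eq_mul]
    _ ≤ w * chiSet G B := Nat.mul_le_mul_right _ hT
  exact this.false

lemma exists_isNClique_of_vivid {w k : ℕ} {B : Fin k → Set V} (hne : ∀ i, (B i).Nonempty)
    (hvivid : ∀ i j : Fin k, i < j → ∀ v ∈ B j,
      w * chiSet G (B i \ G.neighborSet v) < chiSet G (B i)) :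
    ∀ t ≤ w + 1, t ≤ k →
      ∃ T : Finset V, G.IsNClique t T ∧ ∀ v ∈ T, ∃ i : Fin k, k - t ≤ i ∧ v ∈ B i
  | 0, _, _ => ⟨∅, by simp, by simp⟩
  | t + 1, htw, htk => by
    classical
    obtain ⟨T, hT, hTB⟩ := exists_isNClique_of_vivid hne hvivid t (by omega) (by omega)
    let j : Fin k := ⟨k - (t + 1), by omega⟩
    obtain ⟨x, hxB, hxT⟩ := exists_forall_adj_of_mul_chiSet_lt (G := G) (w := w) (hne j)
      (by rw [hT.card_eq]; omega) fun v hv ↦ by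
        obtain ⟨i, hi, hvi⟩ := hTB v hv
        exact hvivid j i (Fin.lt_def.mpr (by simp only [j]; omega)) v hvi
    refine ⟨insert x T, hT.insert fun v hv ↦ (hxT v hv).symm, ?_⟩
    intro v hv
    rcases Finset.mem_insert.mp hv with rfl | hv
    · exact ⟨j, le_rfl, hxB⟩
    · obtain ⟨i, hi, hvi⟩ := hTB v hv
      exact ⟨i, by omega, hvi⟩

end SimpleGraph

theorem stmt_3_general {V : Type*} [Fintype V] (G : SimpleGraph V) (w : ℕ)
    (hclique : G.CliqueFree (w + 1)) (k : ℕ) (B : Fin k → Set V)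
    (hne : ∀ i, (B i).Nonempty)
    (hvivid : ∀ i j : Fin k, i < j → ∀ v ∈ B j,
      w * chiSet G (B i \ G.neighborSet v) < chiSet G (B i)) :
    k ≤ w := by
  by_contra! hk
  obtain ⟨T, hT, -⟩ := exists_isNClique_of_vivid hne hvivid (w + 1) le_rfl hk
  exact hT.not_cliqueFree hclique

/-- Let `G` have clique number at most `w ≥ 2` and let `(B₁, …, B_k)` be a
`w⁻¹`-vivid blockade of nonempty disjoint sets, i.e. for all `i < j` and `v ∈ B j`,
`χ(B i \ N_G(v)) < w⁻¹ · χ(B i)`. Then `k ≤ w`. -/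
theorem stmt_3 {V : Type*} [Fintype V] (G : SimpleGraph V) (w : ℕ) (hw : 2 ≤ w)
    (hclique : G.CliqueFree (w + 1)) (k : ℕ) (B : Fin k → Set V)
    (hne : ∀ i, (B i).Nonempty)
    (hdisj : ∀ i j, i ≠ j → Disjoint (B i) (B j))
    (hvivid : ∀ i j : Fin k, i < j → ∀ v ∈ B j,
      w * chiSet G (B i \ G.neighborSet v) < chiSet G (B i)) :
    k ≤ w :=
  stmt_3_general G w hclique k B hne hvivid
end

section
/- Let G be a graph and μ a submeasure on G (μ(∅)=0, μ({v})=1 for all vertices v, μ monotone under inclusion, and μ subadditive on unions). Let h ≥ 2 be an integer and suppose μ(V(G)) ≥ 2h. Then there exist h pairwise disjoint subsets A_1,…,A_h of V(G) with (2h)^{-1}·μ(V(G)) < μ(A_i) ≤ h^{-1}·μ(V(G)) for all i ∈ [h]. -/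
open SimpleGraph

/-- A submeasure on the vertex set: zero on `∅`, one on singletons, monotone, subadditive. -/
structure IsSubmeasure {V : Type*} (μ : Set V → ℝ) : Prop where
  empty : μ ∅ = 0
  single : ∀ v : V, μ {v} = 1
  mono : ∀ ⦃X Y : Set V⦄, X ⊆ Y → μ X ≤ μ Y
  subadd : ∀ A B : Set V, μ (A ∪ B) ≤ μ A + μ B

/-!
Put `t = μ(V(G)) / (2h) ≥ 1`. A minimal set of submeasure exceeding `t` has submeasure at most
`t + 1 ≤ 2t`, since deleting one of its vertices drops the submeasure to at most `t` and
singletons have submeasure `1`. Choose such sets greedily: after `k < h` of them are chosen, their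
union has submeasure at most `k (t + 1)`, so by subadditivity the rest of the vertex set still
has submeasure at least `(h - k)(t + 1) > t`, and a further set can be chosen inside it.
-/

open Function

lemma Fin.pairwise_disjoint_cons {α : Type*} [PartialOrder α] [OrderBot α] {n : ℕ}
    {a : α} {f : Fin n → α} (ha : ∀ i, Disjoint a (f i)) (hf : Pairwise (Disjoint on f)) :
    Pairwise (Disjoint on (Fin.cons a f : Fin (n + 1) → α)) := by
  intro i j hij
  cases i using Fin.cases <;> cases j using Fin.cases <;>
    simp_all [Function.onFun, Fin.succ_inj, (ha _).symm, hf _]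

namespace IsSubmeasure

variable {V : Type*} {μ : Set V → ℝ}

lemma le_add_compl (hμ : IsSubmeasure μ) (U : Set V) : μ Set.univ ≤ μ U + μ Uᶜ := by
  simpa only [Set.union_compl_self] using hμ.subadd U Uᶜ

lemma biUnion_le_sum (hμ : IsSubmeasure μ) {ι : Type*} (A : ι → Set V) (s : Finset ι) :
    μ (⋃ i ∈ s, A i) ≤ ∑ i ∈ s, μ (A i) := by
  classical
  induction s using Finset.induction_on with
  | empty => simp [hμ.empty]
  | insert i s hi ih =>
    rw [Finset.set_biUnion_insert, Finset.sum_insert hi]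
    linarith [hμ.subadd (A i) (⋃ j ∈ s, A j)]

lemma iUnion_le_sum (hμ : IsSubmeasure μ) {ι : Type*} [Fintype ι] (A : ι → Set V) :
    μ (⋃ i, A i) ≤ ∑ i, μ (A i) := by
  simpa using hμ.biUnion_le_sum A Finset.univ

lemma exists_subset_lt_le_add_one [Finite V] (hμ : IsSubmeasure μ) {t : ℝ} (ht : 0 ≤ t)
    {S : Set V} (hS : t < μ S) : ∃ A ⊆ S, t < μ A ∧ μ A ≤ t + 1 := by
  obtain ⟨A, hAS, hA⟩ := exists_minimal_le_of_wellFoundedLT (fun B ↦ t < μ B) S hS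
  refine ⟨A, hAS, hA.prop, ?_⟩
  obtain ⟨v, hv⟩ : A.Nonempty := by
    rw [Set.nonempty_iff_ne_empty]
    rintro rfl
    linarith [hA.prop, hμ.empty]
  have hdel : μ (A \ {v}) ≤ t :=
    not_lt.mp (hA.not_prop_of_lt (Set.sdiff_singleton_ssubset.mpr hv))
  calc μ A ≤ μ (A \ {v} ∪ {v}) := hμ.mono (Set.subset_sdiff_union A {v})
    _ ≤ μ (A \ {v}) + μ {v} := hμ.subadd _ _
    _ ≤ t + 1 := by rw [hμ.single]; linarith

lemma exists_pairwise_disjoint_lt_le_add_one [Finite V] (hμ : IsSubmeasure μ) {t : ℝ}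
    (ht : 0 ≤ t) (n : ℕ) (hn : n * (t + 1) ≤ μ Set.univ) :
    ∃ A : Fin n → Set V, Pairwise (Disjoint on A) ∧ ∀ i, t < μ (A i) ∧ μ (A i) ≤ t + 1 := by
  induction n with
  | zero => exact ⟨Fin.elim0, fun i ↦ i.elim0, fun i ↦ i.elim0⟩
  | succ n ih =>
    push_cast at hn
    obtain ⟨A, hdisj, hA⟩ := ih (by linarith)
    have hunion : μ (⋃ i, A i) ≤ n * (t + 1) := by
      calc μ (⋃ i, A i) ≤ ∑ i, μ (A i) := hμ.iUnion_le_sum A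
        _ ≤ ∑ _ : Fin n, (t + 1) := Finset.sum_le_sum fun i _ ↦ (hA i).2
        _ = n * (t + 1) := by simp [mul_add]
    have hrest : t < μ (⋃ i, A i)ᶜ := by
      linarith [hμ.le_add_compl (⋃ i, A i)]
    obtain ⟨B, hB, hBt⟩ := hμ.exists_subset_lt_le_add_one ht hrest
    refine ⟨Fin.cons B A, Fin.pairwise_disjoint_cons (fun i ↦ ?_) hdisj, Fin.cases hBt hA⟩
    exact Set.disjoint_of_subset_left hB (Set.disjoint_compl_left_iff_subset.mpr
      (Set.subset_iUnion A i))

end IsSubmeasure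

theorem stmt_7_general {V : Type*} [Fintype V] (μ : Set V → ℝ)
    (hμ : IsSubmeasure μ) (h : ℕ) (hh : 2 ≤ h)
    (hbig : 2 * (h : ℝ) ≤ μ Set.univ) :
    ∃ A : Fin h → Set V, (∀ i j, i ≠ j → Disjoint (A i) (A j)) ∧
      ∀ i, μ Set.univ < 2 * (h : ℝ) * μ (A i) ∧ (h : ℝ) * μ (A i) ≤ μ Set.univ := by
  have hpos : (0 : ℝ) < h := by positivity
  obtain ⟨t, hμt⟩ : ∃ t, μ Set.univ = 2 * h * t := ⟨μ Set.univ / (2 * h), by field_simp⟩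
  have ht : 1 ≤ t := by nlinarith
  obtain ⟨A, hdisj, hA⟩ := hμ.exists_pairwise_disjoint_lt_le_add_one (by linarith) h
    (by rw [hμt]; nlinarith)
  refine ⟨A, fun i j ↦ @hdisj i j, fun i ↦ ⟨?_, ?_⟩⟩
  · rw [hμt]; nlinarith [(hA i).1]
  · rw [hμt]; nlinarith [(hA i).2]

/-- If `μ` is a submeasure on a finite graph `G` with `μ(V(G)) ≥ 2h`,
`h ≥ 2`, then there are `h` pairwise disjoint sets `A₁, …, A_h` with
`(2h)⁻¹·μ(V(G)) < μ(Aᵢ) ≤ h⁻¹·μ(V(G))` for all `i`. -/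
theorem stmt_7 {V : Type*} [Fintype V] (G : SimpleGraph V) (μ : Set V → ℝ)
    (hμ : IsSubmeasure μ) (h : ℕ) (hh : 2 ≤ h)
    (hbig : 2 * (h : ℝ) ≤ μ Set.univ) :
    ∃ A : Fin h → Set V, (∀ i j, i ≠ j → Disjoint (A i) (A j)) ∧
      ∀ i, μ Set.univ < 2 * (h : ℝ) * μ (A i) ∧ (h : ℝ) * μ (A i) ≤ μ Set.univ :=
  stmt_7_general μ hμ h hh hbig
end

section
/- Let H be a graph, G an H-free graph with clique number w, and ε ∈ (0, w^{-1}]. Then for every submeasure μ on G, either G has a stable set S with μ(S) ≥ ε^{2|H|·log w}·μ(V(G)), or there are disjoint A, B ⊆ V(G) with μ(A), μ(B) ≥ ε^{2|H|·log w}·μ(V(G)) and μ(A ∩ N_G(v)) < ε·μ(A) for all v ∈ B. -/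
open SimpleGraph

/-!
Induction on the clique number `w`, with `h = |H|` and `t = ε ^ (2h) μ(V)`. If `t ≤ 1`, one vertex
is a large enough stable set. If a set of measure at least `t` has clique number at most `w / 2`,
apply induction inside it: as `log (w / 2) ≤ log w - 1`, this costs only the factor `ε ^ (2h)`.
If two disjoint sets of measure at least `t` form a sparse pair, we are done. Otherwise we build
an induced copy of `H`. Start from `h` disjoint candidate sets of measure at least `ε ^ h μ(V)`,
one per vertex of `H`; repeatedly place a vertex `v` of one candidate set that is typical for
every other one (its neighbours and its non-neighbours there both carry an `ε`-fraction of the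
measure), and cut each other candidate set down to the neighbours or the non-neighbours of `v`,
as `H` prescribes. Atypical vertices are rare: those with few neighbours in a candidate set
would form a sparse pair with it, and a heavy set of those with few non-neighbours contains a
clique whose common neighbourhood contains another large clique, together more than `w`.
-/

open Finset

universe u

namespace IsSubmeasure

variable {V : Type*} {μ : Set V → ℝ}

lemma nonneg (hμ : IsSubmeasure μ) (X : Set V) : 0 ≤ μ X :=
  hμ.empty ▸ hμ.mono (Set.empty_subset X)

lemma le_sdiff_add (hμ : IsSubmeasure μ) (X Y : Set V) : μ X ≤ μ (X \ Y) + μ Y :=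
  (hμ.mono (Set.subset_sdiff_union _ _)).trans (hμ.subadd _ _)

lemma biUnion_le {ι : Type*} (hμ : IsSubmeasure μ) (s : Finset ι) (F : ι → Set V) :
    μ (⋃ i ∈ s, F i) ≤ ∑ i ∈ s, μ (F i) := by
  classical
  induction s using Finset.induction_on with
  | empty => simp [hμ.empty]
  | insert a s ha ih =>
    rw [Finset.set_biUnion_insert, Finset.sum_insert ha]
    exact (hμ.subadd _ _).trans (by gcongr)

lemma restrict (hμ : IsSubmeasure μ) (X : Set V) :
    IsSubmeasure fun S : Set X => μ (Subtype.val '' S) where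
  empty := by simpa using hμ.empty
  single v := by simpa using hμ.single v
  mono _ _ h := hμ.mono (Set.image_mono h)
  subadd A B := by simpa [Set.image_union] using hμ.subadd _ _

variable [Finite V]

/-- Singletons have measure one, so a minimal set of measure at least `s` overshoots by less
than one. -/
lemma exists_subset_le_lt (hμ : IsSubmeasure μ) {s : ℝ} (hs : 0 ≤ s) {X : Set V}
    (hX : s ≤ μ X) : ∃ A ⊆ X, s ≤ μ A ∧ μ A < s + 1 := by
  obtain ⟨A, hmin⟩ :=
    exists_minimal_of_wellFoundedLT (fun A : Set V => A ⊆ X ∧ s ≤ μ A) ⟨X, subset_rfl, hX⟩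
  obtain ⟨hAX, hsA⟩ := hmin.prop
  refine ⟨A, hAX, hsA, ?_⟩
  obtain rfl | ⟨a, ha⟩ := A.eq_empty_or_nonempty
  · linarith [hμ.empty]
  have hsmall : μ (A \ {a}) < s := by
    by_contra! h
    exact hmin.not_prop_of_lt (Set.sdiff_singleton_ssubset.2 ha) ⟨Set.sdiff_subset.trans hAX, h⟩
  linarith [hμ.le_sdiff_add A {a}, hμ.single a]

lemma exists_pairwiseDisjoint {ι : Type*} [DecidableEq ι] (hμ : IsSubmeasure μ) {s : ℝ}
    (hs : 0 ≤ s) (I : Finset ι) {X : Set V} (hX : #I * (s + 1) ≤ μ X) :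
    ∃ F : ι → Set V, (∀ i ∈ I, F i ⊆ X ∧ s ≤ μ (F i)) ∧ (I : Set ι).PairwiseDisjoint F := by
  induction I using Finset.induction_on generalizing X with
  | empty => exact ⟨fun _ => ∅, by simp, by simp⟩
  | insert a I ha ih =>
    rw [card_insert_of_notMem ha, Nat.cast_succ] at hX
    obtain ⟨A, hAX, hsA, hAs⟩ :=
      hμ.exists_subset_le_lt hs (X := X) (by nlinarith [(Nat.cast_nonneg (α := ℝ) #I)])
    obtain ⟨F, hF, hFdisj⟩ := ih (X := X \ A) (by linarith [hμ.le_sdiff_add X A])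
    have hupd : ∀ i ∈ I, Function.update F a A i = F i := fun i hi =>
      Function.update_of_ne (ne_of_mem_of_not_mem hi ha) _ _
    refine ⟨Function.update F a A, ?_, ?_⟩
    · simp only [mem_insert, forall_eq_or_imp, Function.update_self]
      refine ⟨⟨hAX, hsA⟩, fun i hi => ?_⟩
      rw [hupd i hi]
      exact ⟨(hF i hi).1.trans Set.sdiff_subset, (hF i hi).2⟩
    · rw [coe_insert]
      refine (hFdisj.mono_on fun i hi => (hupd i hi).le).insert_of_notMem ha fun j hj => ?_
      rw [Function.update_self, hupd j hj]
      exact Set.disjoint_sdiff_right.mono_right (hF j hj).1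

end IsSubmeasure

lemma two_mul_mul_pow_le_one {ε : ℝ} (hε0 : 0 ≤ ε) (hε : ε ≤ 1 / 2) (n : ℕ) :
    2 * n * ε ^ n ≤ 1 := by
  have h2n : (2 * n : ℝ) ≤ 2 ^ n := by
    rcases n with _ | n
    · simp
    · have := Nat.lt_two_pow_self (n := n)
      rw [pow_succ]
      exact_mod_cast (by omega : 2 * (n + 1) ≤ 2 ^ n * 2)
  calc 2 * n * ε ^ n ≤ 2 ^ n * ε ^ n := by gcongr
    _ = (2 * ε) ^ n := (mul_pow _ _ _).symm
    _ ≤ 1 := pow_le_one₀ (by positivity) (by linarith)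

lemma rpow_logb_le_mul_pow {ε : ℝ} (hε0 : 0 < ε) (hε1 : ε ≤ 1) (h : ℕ) {n : ℕ} (hn : 2 ≤ n) :
    ε ^ (2 * (h : ℝ) * Real.logb 2 n) ≤
      ε ^ (2 * (h : ℝ) * Real.logb 2 ↑(n / 2)) * ε ^ (2 * h) := by
  have hm : (1 : ℝ) ≤ ↑(n / 2) := by exact_mod_cast (by omega : 1 ≤ n / 2)
  have hlog : 1 + Real.logb 2 ↑(n / 2) ≤ Real.logb 2 n := by
    have h2m : (2 : ℝ) * ↑(n / 2) ≤ n := by exact_mod_cast Nat.mul_div_le n 2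
    have := Real.logb_le_logb_of_le (b := 2) one_lt_two (by positivity) h2m
    rwa [Real.logb_mul two_ne_zero (by positivity), Real.logb_self_eq_one one_lt_two] at this
  rw [← Real.rpow_natCast ε (2 * h), ← Real.rpow_add hε0]
  apply Real.rpow_le_rpow_of_exponent_ge hε0 hε1
  push_cast
  nlinarith [(Nat.cast_nonneg (α := ℝ) h)]

section Embedding

variable {V W : Type*} {G : SimpleGraph V} {H : SimpleGraph W} {μ : Set V → ℝ} {ε t : ℝ}

def IsSparsePair (G : SimpleGraph V) (μ : Set V → ℝ) (ε : ℝ) (A B : Set V) : Prop :=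
  ∀ v ∈ B, μ (A ∩ G.neighborSet v) < ε * μ A

def IsTypical (G : SimpleGraph V) (μ : Set V → ℝ) (ε : ℝ) (Y : Set V) (v : V) : Prop :=
  ε * μ Y ≤ μ (Y ∩ G.neighborSet v) ∧ ε * μ Y ≤ μ (Y \ G.neighborSet v)

lemma measure_setOf_sparse_lt
    (hS : ∀ A B, Disjoint A B → t ≤ μ A → t ≤ μ B → ¬ IsSparsePair G μ ε A B)
    {Y Z : Set V} (hYZ : Disjoint Y Z) (hY : t ≤ μ Y) :
    μ {x ∈ Z | μ (Y ∩ G.neighborSet x) < ε * μ Y} < t := by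
  by_contra! h
  exact hS Y _ (hYZ.mono_right (Set.sep_subset _ _)) hY h fun x hx => hx.2

/-- An `a`-clique of such vertices has many common neighbours in `Y`, among which sits a
`k`-clique; together they form an `(a + k)`-clique. -/
lemma measure_setOf_dense_lt (hμ : IsSubmeasure μ) {a k : ℕ} (hCF : G.CliqueFree (a + k))
    (hak : a ≤ k) (hclique : ∀ X, t ≤ μ X → ∃ s : Finset V, ↑s ⊆ X ∧ G.IsNClique k s)
    {Y Z : Set V} (hYZ : Disjoint Y Z) (hY : t ≤ (1 - a * ε) * μ Y) :
    μ {x ∈ Z | μ (Y \ G.neighborSet x) < ε * μ Y} < t := by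
  classical
  by_contra! hP
  obtain ⟨C, hCP, hC⟩ := hclique _ hP
  obtain ⟨C₀, hC₀C, hC₀⟩ := exists_subset_card_eq (hak.trans hC.card_eq.ge)
  set N := {y ∈ Y | ∀ c ∈ C₀, G.Adj c y}
  have hcover : Y ⊆ N ∪ ⋃ c ∈ C₀, Y \ G.neighborSet c := by
    intro y hy
    by_cases hall : ∀ c ∈ C₀, G.Adj c y
    · exact Or.inl ⟨hy, hall⟩
    · obtain ⟨c, hc, hcy⟩ := not_forall₂.1 hall
      exact Or.inr (Set.mem_biUnion hc ⟨hy, hcy⟩)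
  have hN : t ≤ μ N := by
    have hrest : μ (⋃ c ∈ C₀, Y \ G.neighborSet c) ≤ a * (ε * μ Y) :=
      calc _ ≤ ∑ c ∈ C₀, μ (Y \ G.neighborSet c) := hμ.biUnion_le _ _
        _ ≤ ∑ c ∈ C₀, ε * μ Y := sum_le_sum fun c hc => (hCP (hC₀C hc)).2.le
        _ = a * (ε * μ Y) := by rw [sum_const, hC₀, nsmul_eq_mul]
    linarith [hμ.mono hcover, hμ.subadd N (⋃ c ∈ C₀, Y \ G.neighborSet c)]
  obtain ⟨C', hC'N, hC'⟩ := hclique N hN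
  have hdisj : Disjoint C₀ C' := Finset.disjoint_left.2 fun x hx hx' =>
    Set.disjoint_left.1 hYZ (hC'N hx').1 (hCP (hC₀C hx)).1
  refine hCF (C₀ ∪ C') ⟨?_, by rw [card_union_of_disjoint hdisj, hC₀, hC'.card_eq]⟩
  rw [coe_union]
  exact Set.pairwise_union.2 ⟨hC.isClique.subset (coe_subset.2 hC₀C), hC'.isClique,
    fun x hx y hy _ => ⟨(hC'N hy).2 x hx, ((hC'N hy).2 x hx).symm⟩⟩

lemma measure_setOf_not_isTypical_lt (hμ : IsSubmeasure μ)
    (hS : ∀ A B, Disjoint A B → t ≤ μ A → t ≤ μ B → ¬ IsSparsePair G μ ε A B)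
    {a k : ℕ} (hCF : G.CliqueFree (a + k)) (hak : a ≤ k) (haε : a * ε ≤ 2 / 3)
    (hclique : ∀ X, t ≤ μ X → ∃ s : Finset V, ↑s ⊆ X ∧ G.IsNClique k s) (ht : 0 ≤ t)
    {Y Z : Set V} (hYZ : Disjoint Y Z) (hY : 3 * t ≤ μ Y) :
    μ {x ∈ Z | ¬ IsTypical G μ ε Y x} < 2 * t := by
  have hsub : {x ∈ Z | ¬ IsTypical G μ ε Y x} ⊆
      {x ∈ Z | μ (Y ∩ G.neighborSet x) < ε * μ Y} ∪
        {x ∈ Z | μ (Y \ G.neighborSet x) < ε * μ Y} := by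
    rintro x ⟨hx, hxY⟩
    simp only [IsTypical, not_and_or, not_le] at hxY
    exact hxY.imp (⟨hx, ·⟩) (⟨hx, ·⟩)
  calc _ ≤ _ := hμ.mono hsub
    _ ≤ _ := hμ.subadd _ _
    _ < t + t := add_lt_add (measure_setOf_sparse_lt hS hYZ (by linarith))
        (measure_setOf_dense_lt hμ hCF hak hclique hYZ (by nlinarith [hμ.nonneg Y]))
    _ = 2 * t := by ring

/-- The vertices outside `R` are already placed by `φ`, inducing a copy of `H` on them; each
`u ∈ R` may still be placed at any vertex of `f u`. -/
structure IsPartialEmbedding (H : SimpleGraph W) (G : SimpleGraph V) (R : Finset W) (φ : W → V)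
    (f : W → Set V) : Prop where
  map : ∀ u ∉ R, ∀ u' ∉ R, u ≠ u' → φ u ≠ φ u' ∧ (G.Adj (φ u) (φ u') ↔ H.Adj u u')
  candidates : ∀ u ∈ R, ∀ u' ∉ R, ∀ x ∈ f u, x ≠ φ u' ∧ (G.Adj x (φ u') ↔ H.Adj u u')
  pairwiseDisjoint : (R : Set W).PairwiseDisjoint f

def refineCandidates (H : SimpleGraph W) (G : SimpleGraph V) (f : W → Set V) (u₀ : W) (v : V) :
    W → Set V :=
  fun u => {x ∈ f u | G.Adj v x ↔ H.Adj u u₀}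

lemma IsTypical.le_measure_refineCandidates {f : W → Set V} {u₀ u : W} {v : V}
    (h : IsTypical G μ ε (f u) v) : ε * μ (f u) ≤ μ (refineCandidates H G f u₀ v u) := by
  by_cases hu : H.Adj u u₀
  · simp only [refineCandidates, hu, iff_true]
    exact h.1
  · simp only [refineCandidates, hu, iff_false]
    exact h.2

namespace IsPartialEmbedding

variable {R : Finset W} {φ : W → V} {f : W → Set V}

lemma nonempty_embedding_of_empty (hP : IsPartialEmbedding H G ∅ φ f) : Nonempty (H ↪g G) := by
  have hmap u u' (hne : u ≠ u') := hP.map u (notMem_empty u) u' (notMem_empty u') hne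
  refine ⟨⟨⟨φ, fun u u' he => by_contra fun hne => (hmap u u' hne).1 he⟩, fun {u u'} => ?_⟩⟩
  obtain rfl | hne := eq_or_ne u u'
  · simp
  · exact (hmap u u' hne).2

lemma extend [DecidableEq W] (hP : IsPartialEmbedding H G R φ f) {u₀ : W} (hu₀ : u₀ ∈ R) {v : V}
    (hv : v ∈ f u₀) :
    IsPartialEmbedding H G (R.erase u₀) (Function.update φ u₀ v) (refineCandidates H G f u₀ v) where
  map u hu u' hu' hne := by
    simp only [mem_erase, not_and_or, not_not] at hu hu'
    rcases hu with rfl | hu <;> rcases hu' with rfl | hu'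
    · exact absurd rfl hne
    · rw [Function.update_self, Function.update_of_ne hne.symm]
      exact hP.candidates u hu₀ u' hu' v hv
    · rw [Function.update_self, Function.update_of_ne hne]
      obtain ⟨hne', hadj⟩ := hP.candidates u' hu₀ u hu v hv
      exact ⟨hne'.symm, by rw [G.adj_comm, H.adj_comm, hadj]⟩
    · rw [Function.update_of_ne (ne_of_mem_of_not_mem hu₀ hu).symm,
        Function.update_of_ne (ne_of_mem_of_not_mem hu₀ hu').symm]
      exact hP.map u hu u' hu' hne
  candidates u hu u' hu' x hx := by
    obtain ⟨hne, huR⟩ := mem_erase.1 hu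
    have hxu := hx.1
    simp only [mem_erase, not_and_or, not_not] at hu'
    rcases hu' with rfl | hu'
    · rw [Function.update_self]
      exact ⟨fun hxv => Set.disjoint_left.1 (hP.pairwiseDisjoint huR hu₀ hne) hxu (hxv ▸ hv),
        (G.adj_comm x v).trans hx.2⟩
    · rw [Function.update_of_ne (ne_of_mem_of_not_mem hu₀ hu').symm]
      exact hP.candidates u huR u' hu' x hxu
  pairwiseDisjoint :=
    (hP.pairwiseDisjoint.subset (coe_subset.2 (erase_subset _ _))).mono
      fun _ => Set.sep_subset _ _

end IsPartialEmbedding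

lemma exists_isTypical [DecidableEq W] (hμ : IsSubmeasure μ)
    (hatyp : ∀ Y Z, Disjoint Y Z → 3 * t ≤ μ Y → μ {x ∈ Z | ¬ IsTypical G μ ε Y x} < 2 * t)
    (ht : 0 < t) {R : Finset W} {f : W → Set V} (hdisj : (R : Set W).PairwiseDisjoint f)
    {u₀ : W} (hu₀ : u₀ ∈ R) (hf : ∀ u ∈ R, (2 * #R - 1) * t ≤ μ (f u)) :
    ∃ v ∈ f u₀, ∀ u ∈ R.erase u₀, IsTypical G μ ε (f u) v := by
  set bad := ⋃ u ∈ R.erase u₀, {x ∈ f u₀ | ¬ IsTypical G μ ε (f u) x}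
  have hbad : μ bad ≤ (#R - 1) * (2 * t) := by
    calc μ bad ≤ ∑ u ∈ R.erase u₀, μ {x ∈ f u₀ | ¬ IsTypical G μ ε (f u) x} :=
          hμ.biUnion_le _ _
      _ ≤ ∑ u ∈ R.erase u₀, 2 * t := sum_le_sum fun u hu => by
          obtain ⟨hne, hu⟩ := mem_erase.1 hu
          have hR : 2 ≤ #R := one_lt_card.2 ⟨u, hu, u₀, hu₀, hne⟩
          refine (hatyp _ _ (hdisj hu hu₀ hne) ((hf u hu).trans' ?_)).le
          gcongr
          linarith [(Nat.ofNat_le_cast (α := ℝ)).2 hR]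
      _ = (#R - 1) * (2 * t) := by
          rw [sum_const, card_erase_of_mem hu₀, nsmul_eq_mul,
            Nat.cast_pred (card_pos.2 ⟨u₀, hu₀⟩)]
  have hnot : ¬ f u₀ ⊆ bad := fun h => by linarith [hμ.mono h, hf u₀ hu₀]
  obtain ⟨v, hv, hvbad⟩ := Set.not_subset.1 hnot
  exact ⟨v, hv, fun u hu => by_contra fun h => hvbad (Set.mem_biUnion hu ⟨hv, h⟩)⟩

/-- Each step places one vertex and shrinks the remaining candidate sets by a factor `ε`. -/
lemma IsPartialEmbedding.nonempty_embedding [DecidableEq W] (hμ : IsSubmeasure μ)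
    (hatyp : ∀ Y Z, Disjoint Y Z → 3 * t ≤ μ Y → μ {x ∈ Z | ¬ IsTypical G μ ε Y x} < 2 * t)
    (hε0 : 0 < ε) (hε : ε ≤ 1 / 2) (ht : 0 < t) {R : Finset W} {φ : W → V} {f : W → Set V}
    (hP : IsPartialEmbedding H G R φ f) (hf : ∀ u ∈ R, t ≤ ε ^ #R * μ (f u)) :
    Nonempty (H ↪g G) := by
  induction R using Finset.strongInduction generalizing φ f with
  | H R ih =>
  obtain rfl | ⟨u₀, hu₀⟩ := R.eq_empty_or_nonempty
  · exact hP.nonempty_embedding_of_empty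
  have hR : (2 * #R - 1) * ε ^ #R ≤ 1 := by
    linarith [two_mul_mul_pow_le_one hε0.le hε #R, pow_nonneg hε0.le #R]
  have hL : ∀ u ∈ R, (2 * #R - 1) * t ≤ μ (f u) := fun u hu => by
    have h1 : (1 : ℝ) ≤ 2 * #R - 1 := by
      linarith [(Nat.one_le_cast (α := ℝ)).2 (card_pos.2 ⟨u₀, hu₀⟩)]
    nlinarith [hf u hu, hμ.nonneg (f u)]
  obtain ⟨v, hv, htyp⟩ := exists_isTypical hμ hatyp ht hP.pairwiseDisjoint hu₀ hL
  refine ih _ (erase_ssubset hu₀) (hP.extend hu₀ hv) fun u hu => ?_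
  calc t ≤ ε ^ #R * μ (f u) := hf u (mem_of_mem_erase hu)
    _ = ε ^ #(R.erase u₀) * (ε * μ (f u)) := by
        rw [card_erase_of_mem hu₀, ← mul_assoc, ← pow_succ,
          Nat.sub_add_cancel (card_pos.2 ⟨u₀, hu₀⟩)]
    _ ≤ ε ^ #(R.erase u₀) * μ (refineCandidates H G f u₀ v u) :=
        mul_le_mul_of_nonneg_left (htyp u hu).le_measure_refineCandidates (by positivity)

theorem nonempty_embedding_of_measure_not_isTypical_lt [Finite V] [Fintype W] (hμ : IsSubmeasure μ)
    (hε0 : 0 < ε) (hε : ε ≤ 1 / 2) (ht₁ : 1 ≤ t)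
    (ht : t ≤ ε ^ (2 * Fintype.card W) * μ Set.univ)
    (hatyp : ∀ Y Z, Disjoint Y Z → 3 * t ≤ μ Y → μ {x ∈ Z | ¬ IsTypical G μ ε Y x} < 2 * t) :
    Nonempty (H ↪g G) := by
  classical
  set h := Fintype.card W
  have hμV : 2 * h ≤ μ Set.univ := by
    have h4h := two_mul_mul_pow_le_one hε0.le hε (2 * h)
    push_cast at h4h
    have := mul_le_mul_of_nonneg_left ht (by positivity : (0 : ℝ) ≤ 2 * h)
    nlinarith [hμ.nonneg Set.univ]
  have hhalf : h * ε ^ h * μ Set.univ ≤ μ Set.univ / 2 := by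
    nlinarith [two_mul_mul_pow_le_one hε0.le hε h, hμ.nonneg Set.univ]
  obtain ⟨F, hF, hFdisj⟩ := hμ.exists_pairwiseDisjoint (s := ε ^ h * μ Set.univ)
    (mul_nonneg (by positivity) (hμ.nonneg _)) (Finset.univ : Finset W) (X := Set.univ)
    (by rw [card_univ]; nlinarith)
  have : Nonempty V := by
    by_contra hV
    rw [not_nonempty_iff, ← Set.univ_eq_empty_iff] at hV
    rw [hV, hμ.empty] at ht
    linarith
  have hP : IsPartialEmbedding H G Finset.univ (fun _ => Classical.arbitrary V) F :=
    ⟨fun u hu => absurd (mem_univ u) hu, fun _ _ u' hu' => absurd (mem_univ u') hu', hFdisj⟩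
  refine hP.nonempty_embedding hμ hatyp hε0 hε (by linarith) fun u _ => ?_
  calc t ≤ ε ^ h * (ε ^ h * μ Set.univ) := by rwa [← mul_assoc, ← pow_add, ← two_mul]
    _ ≤ ε ^ #(Finset.univ : Finset W) * μ (F u) := by
        rw [card_univ]
        gcongr
        exact (hF u (mem_univ u)).2

/-- For `n = 2` the bound `ε ≤ n⁻¹` does not make `(n / 2 + 1) ε` less than `1`, so the
`(n + 1)`-clique is assembled from cliques of sizes `n - n / 2` and `n / 2 + 1`. -/
theorem nonempty_embedding_of_not_cliqueFree_induce [Finite V] [Fintype W] {n : ℕ}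
    (hμ : IsSubmeasure μ) (hε0 : 0 < ε) (hεn : ε ≤ (n : ℝ)⁻¹) (hn : 2 ≤ n)
    (hCF : G.CliqueFree (n + 1)) (ht : 1 ≤ ε ^ (2 * Fintype.card W) * μ Set.univ)
    (hclique : ∀ X, ε ^ (2 * Fintype.card W) * μ Set.univ ≤ μ X →
      ¬ (G.induce X).CliqueFree (n / 2 + 1))
    (hS : ∀ A B, Disjoint A B → ε ^ (2 * Fintype.card W) * μ Set.univ ≤ μ A →
      ε ^ (2 * Fintype.card W) * μ Set.univ ≤ μ B → ¬ IsSparsePair G μ ε A B) :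
    Nonempty (H ↪g G) := by
  have hn' : (2 : ℝ) ≤ n := by exact_mod_cast hn
  have hnε : n * ε ≤ 1 :=
    calc n * ε ≤ n * (n : ℝ)⁻¹ := by gcongr
      _ = 1 := mul_inv_cancel₀ (by positivity)
  have hε : ε ≤ 1 / 2 := by nlinarith
  have haε : ((n - n / 2 : ℕ) : ℝ) * ε ≤ 2 / 3 := by
    have h3 : ((3 * (n - n / 2) : ℕ) : ℝ) ≤ ((2 * n : ℕ) : ℝ) := by exact_mod_cast (by omega)
    push_cast at h3
    nlinarith
  have hCF' : G.CliqueFree (n - n / 2 + (n / 2 + 1)) := by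
    rwa [show n - n / 2 + (n / 2 + 1) = n + 1 by omega]
  refine nonempty_embedding_of_measure_not_isTypical_lt hμ hε0 hε ht le_rfl fun Y Z hYZ hY => ?_
  refine measure_setOf_not_isTypical_lt hμ hS hCF' (by omega) haε (fun X hX => ?_) (by linarith)
    hYZ hY
  obtain ⟨s, hs⟩ := not_forall_not.1 (hclique X hX)
  exact ⟨s.map (.subtype _), by simp, (isNClique_induce_iff X s _).1 hs⟩

end Embedding

section StableOrSparse

variable {V : Type*} {G : SimpleGraph V} {μ : Set V → ℝ} {ε c : ℝ}

def StableOrSparse (G : SimpleGraph V) (μ : Set V → ℝ) (ε c : ℝ) : Prop :=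
  (∃ S : Set V, (∀ u ∈ S, ∀ v ∈ S, ¬ G.Adj u v) ∧ c * μ Set.univ ≤ μ S) ∨
    ∃ A B : Set V, Disjoint A B ∧ c * μ Set.univ ≤ μ A ∧ c * μ Set.univ ≤ μ B ∧
      IsSparsePair G μ ε A B

lemma StableOrSparse.of_mul_le_one (hμ : IsSubmeasure μ) (hc : c * μ Set.univ ≤ 1) :
    StableOrSparse G μ ε c := by
  left
  rcases isEmpty_or_nonempty V with hV | ⟨⟨v⟩⟩
  · refine ⟨∅, by simp, ?_⟩
    rw [Set.univ_eq_empty_iff.2 hV, hμ.empty, mul_zero]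
  · exact ⟨{v}, by simp, by rwa [hμ.single]⟩

lemma StableOrSparse.of_induce {X : Set V} {c' : ℝ}
    (h : StableOrSparse (G.induce X) (fun S => μ (Subtype.val '' S)) ε c')
    (hc : c * μ Set.univ ≤ c' * μ X) : StableOrSparse G μ ε c := by
  simp only [StableOrSparse, Subtype.coe_image_univ] at h
  rcases h with ⟨S, hS, hSμ⟩ | ⟨A, B, hAB, hA, hB, hsp⟩
  · refine .inl ⟨Subtype.val '' S, ?_, hc.trans hSμ⟩
    rintro _ ⟨u, hu, rfl⟩ _ ⟨v, hv, rfl⟩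
    exact hS u hu v hv
  refine .inr ⟨_, _, (Set.disjoint_image_iff Subtype.val_injective).2 hAB, hc.trans hA,
    hc.trans hB, ?_⟩
  rintro _ ⟨v, hv, rfl⟩
  have himage : Subtype.val '' A ∩ G.neighborSet v =
      Subtype.val '' (A ∩ (G.induce X).neighborSet v) := by
    ext x
    constructor
    · rintro ⟨⟨a, ha, rfl⟩, hx⟩
      exact ⟨a, ⟨ha, hx⟩, rfl⟩
    · rintro ⟨a, ⟨ha, hx⟩, rfl⟩
      exact ⟨⟨a, ha, rfl⟩, hx⟩
  rw [himage]
  exact hsp v hv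

end StableOrSparse

theorem stableOrSparse_of_cliqueFree {W : Type*} [Fintype W] (H : SimpleGraph W) {ε : ℝ}
    (hε0 : 0 < ε) (n : ℕ) :
    ∀ {V : Type u} [Finite V] (G : SimpleGraph V) (μ : Set V → ℝ), IsSubmeasure μ →
      FreeOf G H → G.CliqueFree (n + 1) → ε ≤ (n : ℝ)⁻¹ →
      StableOrSparse G μ ε (ε ^ (2 * (Fintype.card W : ℝ) * Real.logb 2 n)) := by
  induction n using Nat.strong_induction_on with
  | _ n ih =>
  intro V _ G μ hμ hfree hCF hεn
  rcases Nat.lt_or_ge n 2 with hn | hn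
  · interval_cases n
    · simp only [CharP.cast_eq_zero, inv_zero] at hεn
      linarith
    · obtain rfl := cliqueFree_two.1 hCF
      exact .inl ⟨Set.univ, by simp, by simp⟩
  set h := Fintype.card W
  set t := ε ^ (2 * h) * μ Set.univ
  have hε1 : ε ≤ 1 := hεn.trans (inv_le_one_of_one_le₀ (by exact_mod_cast (by omega : 1 ≤ n)))
  have hc := rpow_logb_le_mul_pow hε0 hε1 h hn
  have hc' : ε ^ (2 * (h : ℝ) * Real.logb 2 ↑(n / 2)) ≤ 1 :=
    Real.rpow_le_one hε0.le hε1 (mul_nonneg (by positivity)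
      (Real.logb_nonneg one_lt_two (by exact_mod_cast (by omega : 1 ≤ n / 2))))
  have hct : ε ^ (2 * (h : ℝ) * Real.logb 2 n) * μ Set.univ ≤ t := by
    have := hc.trans (mul_le_of_le_one_left (by positivity) hc')
    exact mul_le_mul_of_nonneg_right this (hμ.nonneg _)
  by_cases hsmall : t ≤ 1
  · exact .of_mul_le_one hμ (hct.trans hsmall)
  by_cases hX : ∃ X : Set V, t ≤ μ X ∧ (G.induce X).CliqueFree (n / 2 + 1)
  · obtain ⟨X, hXt, hXCF⟩ := hX
    have hfreeX : FreeOf (G.induce X) H := ⟨fun e => hfree.false ((Embedding.induce X).comp e)⟩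
    have hεm : ε ≤ (↑(n / 2) : ℝ)⁻¹ := hεn.trans (inv_anti₀ (by exact_mod_cast (by omega))
      (by exact_mod_cast Nat.div_le_self n 2))
    refine (ih (n / 2) (by omega) (G.induce X) _ (hμ.restrict X) hfreeX hXCF hεm).of_induce ?_
    calc _ ≤ ε ^ (2 * (h : ℝ) * Real.logb 2 ↑(n / 2)) * t := by
          rw [← mul_assoc]
          exact mul_le_mul_of_nonneg_right hc (hμ.nonneg _)
      _ ≤ _ := by gcongr
  by_cases hP : ∃ A B, Disjoint A B ∧ t ≤ μ A ∧ t ≤ μ B ∧ IsSparsePair G μ ε A B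
  · obtain ⟨A, B, hAB, hA, hB, hsp⟩ := hP
    exact .inr ⟨A, B, hAB, hct.trans hA, hct.trans hB, hsp⟩
  refine absurd (nonempty_embedding_of_not_cliqueFree_induce hμ hε0 hεn hn hCF (le_of_not_ge hsmall)
    (fun X hXt hXCF => hX ⟨X, hXt, hXCF⟩) fun A B hAB hA hB hsp => hP ⟨A, B, hAB, hA, hB, hsp⟩)
    (not_nonempty_iff.2 hfree)

/-- Let `H` be a graph, `G` an `H`-free graph with clique number `w`, and
`ε ∈ (0, w⁻¹]`. For every submeasure `μ` on `G`, either `G` has a stable set `S` with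
`μ(S) ≥ ε^{2|H|·log w}·μ(V(G))` (binary log), or there are disjoint `A, B` with
`μ(A), μ(B) ≥ ε^{2|H|·log w}·μ(V(G))` and `μ(A ∩ N_G(v)) < ε·μ(A)` for all `v ∈ B`. -/
theorem stmt_11 {V W : Type*} [Fintype V] [Fintype W]
    (H : SimpleGraph W) (G : SimpleGraph V) (hfree : FreeOf G H)
    (w : ℕ) (hw : G.cliqueNum = w)
    (ε : ℝ) (hε0 : 0 < ε) (hε : ε ≤ (w : ℝ)⁻¹)
    (μ : Set V → ℝ) (hμ : IsSubmeasure μ) :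
    (∃ S : Set V, (∀ u ∈ S, ∀ v ∈ S, ¬ G.Adj u v) ∧
        ε ^ (2 * (Fintype.card W : ℝ) * Real.logb 2 w) * μ Set.univ ≤ μ S) ∨
      (∃ A B : Set V, Disjoint A B ∧
        ε ^ (2 * (Fintype.card W : ℝ) * Real.logb 2 w) * μ Set.univ ≤ μ A ∧
        ε ^ (2 * (Fintype.card W : ℝ) * Real.logb 2 w) * μ Set.univ ≤ μ B ∧
        ∀ v ∈ B, μ (A ∩ G.neighborSet v) < ε * μ A) := by
  have hCF : G.CliqueFree (w + 1) := fun s hs => by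
    have := hs.isClique.card_le_cliqueNum
    rw [hs.card_eq, hw] at this
    omega
  exact stableOrSparse_of_cliqueFree H hε0 w G μ hμ hfree hCF hε
end

section
/- Let t ≥ 1, w ≥ 2 be integers and let R(t,w) be the least n such that every n-vertex graph has a stable set of size t or a clique of size w. Let G be a t-broom-free graph with ω(G) ≤ w, let (P,Q) be an anticomplete pair of vertex sets of G with G[P] and G[Q] connected, and let u be a vertex of G that has a neighbour in both P and Q. Then G[P \ N_G(u)] has no induced subgraph of minimum degree at least 2R(t,w) − 1. -/
open SimpleGraph

/-- The `(k,t)`-broom: a path `v₁ ⋯ v_k` on `k` vertices together with `t` pairwise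
nonadjacent vertices all adjacent to `v_k` (i.e. the graph obtained from the
`(k+1)`-vertex path by substituting a `t`-vertex edgeless graph for a leaf).
A `t`-broom is `broom 3 t`. -/
def broom (k t : ℕ) : SimpleGraph (Fin k ⊕ Fin t) :=
  SimpleGraph.fromRel (fun x y =>
    match x, y with
    | Sum.inl i, Sum.inl j => (j : ℕ) = (i : ℕ) + 1
    | Sum.inl i, Sum.inr _ => (i : ℕ) = k - 1
    | _, _ => False)

/-- The Ramsey number `R(t,w)`: the least `n` such that every `n`-vertex graph has a
stable set of size `t` or a clique of size `w`. -/
noncomputable def ramsey (t w : ℕ) : ℕ :=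
  sInf {n | ∀ G : SimpleGraph (Fin n),
    (∃ S : Finset (Fin n), Gᶜ.IsNClique t S) ∨ ∃ K : Finset (Fin n), G.IsNClique w K}



universe u

section RamseyHelpers

open SimpleGraph

lemma ramsey_fin_aux (t : ℕ) : ∀ w : ℕ, ∃ n : ℕ, ∀ {V : Type u} (G : SimpleGraph V)
    (B : Finset V), n ≤ B.card → (∃ S : Finset V, S ⊆ B ∧ Gᶜ.IsNClique t S) ∨
      (∃ K : Finset V, K ⊆ B ∧ G.IsNClique w K) := by
  induction t with
  | zero => exact fun w => ⟨0, fun G B _ => Or.inl ⟨∅, Finset.empty_subset _, by simp⟩⟩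
  | succ t iht =>
    intro w
    induction w with
    | zero => exact ⟨0, fun G B _ => Or.inr ⟨∅, Finset.empty_subset _, by simp⟩⟩
    | succ w ihw =>
      obtain ⟨n1, h1⟩ := iht (w + 1)
      obtain ⟨n2, h2⟩ := ihw
      refine ⟨n1 + n2 + 1, ?_⟩
      intro V G B hB
      classical
      have hvB : B.Nonempty := Finset.card_pos.mp (by omega)
      obtain ⟨v, hvB⟩ := hvB
      set NB := (B.erase v).filter (fun x => G.Adj v x) with hNB
      set NN := (B.erase v).filter (fun x => ¬ G.Adj v x) with hNN
      have hsum : NB.card + NN.card = (B.erase v).card :=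
        Finset.card_filter_add_card_filter_not _
      have hcard : (B.erase v).card = B.card - 1 := Finset.card_erase_of_mem hvB
      have hcases : n1 ≤ NN.card ∨ n2 ≤ NB.card := by omega
      rcases hcases with hc | hc
      · rcases h1 G NN hc with ⟨S, hSsub, hS⟩ | ⟨K, hKsub, hK⟩
        · refine Or.inl ⟨insert v S, ?_, ?_⟩
          · intro x hx
            rcases Finset.mem_insert.mp hx with rfl | hx
            · exact hvB
            · exact Finset.erase_subset _ _ (Finset.filter_subset _ _ (hSsub hx))
          · refine hS.insert fun b hb => ?_
            have := hSsub hb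
            rw [hNN, Finset.mem_filter, Finset.mem_erase] at this
            rw [SimpleGraph.compl_adj]
            exact ⟨Ne.symm this.1.1, fun h => this.2 h⟩
        · exact Or.inr ⟨K, fun x hx => Finset.erase_subset _ _
            (Finset.filter_subset _ _ (hKsub hx)), hK⟩
      · rcases h2 G NB hc with ⟨S, hSsub, hS⟩ | ⟨K, hKsub, hK⟩
        · exact Or.inl ⟨S, fun x hx => Finset.erase_subset _ _
            (Finset.filter_subset _ _ (hSsub hx)), hS⟩
        · refine Or.inr ⟨insert v K, ?_, ?_⟩
          · intro x hx
            rcases Finset.mem_insert.mp hx with rfl | hx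
            · exact hvB
            · exact Finset.erase_subset _ _ (Finset.filter_subset _ _ (hKsub hx))
          · refine hK.insert fun b hb => ?_
            have := hKsub hb
            rw [hNB, Finset.mem_filter] at this
            exact this.2

end RamseyHelpers

lemma exists_adj_dist_pred {V : Type*} {G : SimpleGraph V} {a b : V}
    (h : G.Reachable a b) (hd : 1 ≤ G.dist a b) :
    ∃ c, G.Adj a c ∧ G.Reachable c b ∧ G.dist c b + 1 = G.dist a b := by
  obtain ⟨W, hW⟩ := h.exists_walk_length_eq_dist
  cases W with
  | nil => simp only [Walk.length_nil] at hW; omega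
  | @cons _ c _ hadj W1 =>
    refine ⟨c, hadj, W1.reachable, ?_⟩
    have h1 : G.dist c b ≤ W1.length := SimpleGraph.dist_le W1
    obtain ⟨W2, hW2⟩ := W1.reachable.exists_walk_length_eq_dist
    have h2 : G.dist a b ≤ (Walk.cons hadj W2).length := SimpleGraph.dist_le _
    simp only [Walk.length_cons] at hW h2
    omega

lemma dist_le_one_add {V : Type*} {G : SimpleGraph V} {x y z : V} (hxy : G.Adj x y)
    (h : G.Reachable y z) : G.dist x z ≤ G.dist y z + 1 := by
  obtain ⟨W, hW⟩ := h.exists_walk_length_eq_dist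
  have := SimpleGraph.dist_le (Walk.cons hxy W)
  simpa [hW] using this

lemma broom_inl_inl {k t : ℕ} (i j : Fin k) :
    (broom k t).Adj (Sum.inl i) (Sum.inl j) ↔ ((j : ℕ) = i + 1 ∨ (i : ℕ) = j + 1) := by
  rw [broom, SimpleGraph.fromRel_adj]
  constructor
  · rintro ⟨-, h⟩; exact h
  · intro h
    refine ⟨?_, h⟩
    intro heq
    injection heq with h'
    subst h'
    omega

lemma broom_inl_inr {k t : ℕ} (i : Fin k) (j : Fin t) :
    (broom k t).Adj (Sum.inl i) (Sum.inr j) ↔ (i : ℕ) = k - 1 := by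
  rw [broom, SimpleGraph.fromRel_adj]
  constructor
  · rintro ⟨-, h | h⟩
    · exact h
    · exact h.elim
  · intro h; exact ⟨Sum.inl_ne_inr, Or.inl h⟩

lemma broom_inr_inl {k t : ℕ} (i : Fin k) (j : Fin t) :
    (broom k t).Adj (Sum.inr j) (Sum.inl i) ↔ (i : ℕ) = k - 1 := by
  rw [(broom k t).adj_comm, broom_inl_inr]

lemma broom_inr_inr {k t : ℕ} (i j : Fin t) :
    ¬ (broom k t).Adj (Sum.inr i) (Sum.inr j) := by
  rw [broom, SimpleGraph.fromRel_adj]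
  rintro ⟨-, h | h⟩ <;> exact h

lemma broom_embed_of {V : Type*} (G : SimpleGraph V) (t : ℕ) (a b c : V) (T : Finset V)
    (hT : T.card = t)
    (hab : G.Adj a b) (hbc : G.Adj b c) (hac : ¬ G.Adj a c) (hacne : a ≠ c)
    (haT : ∀ x ∈ T, ¬ G.Adj a x) (hbT : ∀ x ∈ T, ¬ G.Adj b x)
    (hcT : ∀ x ∈ T, G.Adj c x)
    (hTT : ∀ x ∈ T, ∀ y ∈ T, x ≠ y → ¬ G.Adj x y)
    (haTm : a ∉ T) (hbTm : b ∉ T) (hcTm : c ∉ T) :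
    Nonempty (broom 3 t ↪g G) := by
  classical
  let E := T.equivFinOfCardEq hT
  let e : Fin t → V := fun j => ↑(E.symm j)
  have heinj : Function.Injective e := fun i j h =>
    E.symm.injective (Subtype.coe_injective h)
  have heT : ∀ j, e j ∈ T := fun j => (E.symm j).2
  let f : Fin 3 ⊕ Fin t → V := Sum.elim ![a, b, c] e
  have hinj : Function.Injective f := by
    rintro (i | i) (j | j) h
    · fin_cases i <;> fin_cases j <;>
        first
          | rfl
          | (exact absurd (h : _ = _) hab.ne)
          | (exact absurd ((h : _ = _).symm) hab.ne)
          | (exact absurd (h : _ = _) hacne)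
          | (exact absurd ((h : _ = _).symm) hacne)
          | (exact absurd (h : _ = _) hbc.ne)
          | (exact absurd ((h : _ = _).symm) hbc.ne)
    · exfalso
      have hj := heT j
      fin_cases i
      · have h' : a = e j := h; exact haTm (h' ▸ hj)
      · have h' : b = e j := h; exact hbTm (h' ▸ hj)
      · have h' : c = e j := h; exact hcTm (h' ▸ hj)
    · exfalso
      have hi := heT i
      fin_cases j
      · have h' : e i = a := h; exact haTm (h' ▸ hi)
      · have h' : e i = b := h; exact hbTm (h' ▸ hi)
      · have h' : e i = c := h; exact hcTm (h' ▸ hi)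
    · exact congrArg Sum.inr (heinj h)
  refine ⟨⟨⟨f, hinj⟩, ?_⟩⟩
  rintro (i | i) (j | j)
  · fin_cases i <;> fin_cases j <;> rw [broom_inl_inl] <;>
      first
        | (exact iff_of_false (G.irrefl) (by norm_num))
        | (exact iff_of_true hab (by norm_num))
        | (exact iff_of_true hab.symm (by norm_num))
        | (exact iff_of_true hbc (by norm_num))
        | (exact iff_of_true hbc.symm (by norm_num))
        | (exact iff_of_false hac (by norm_num))
        | (exact iff_of_false (fun hh => hac hh.symm) (by norm_num))
  · fin_cases i <;> rw [broom_inl_inr]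
    · exact iff_of_false (haT _ (heT j)) (by norm_num)
    · exact iff_of_false (hbT _ (heT j)) (by norm_num)
    · exact iff_of_true (hcT _ (heT j)) (by norm_num)
  · fin_cases j <;> rw [broom_inr_inl]
    · exact iff_of_false (fun hh => haT _ (heT i) hh.symm) (by norm_num)
    · exact iff_of_false (fun hh => hbT _ (heT i) hh.symm) (by norm_num)
    · exact iff_of_true (hcT _ (heT i)).symm (by norm_num)
  · refine iff_of_false ?_ (broom_inr_inr i j)
    intro h
    by_cases hij : i = j
    · subst hij; exact G.irrefl h
    · exact hTT _ (heT i) _ (heT j) (fun hh => hij (heinj hh)) h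

lemma ramsey_mem' (t w : ℕ) : ∀ G : SimpleGraph (Fin (ramsey t w)),
    (∃ S : Finset (Fin (ramsey t w)), Gᶜ.IsNClique t S) ∨
      ∃ K : Finset (Fin (ramsey t w)), G.IsNClique w K := by
  obtain ⟨n, hn⟩ := ramsey_fin_aux t w
  have : ramsey t w ∈ {n | ∀ G : SimpleGraph (Fin n),
      (∃ S : Finset (Fin n), Gᶜ.IsNClique t S) ∨ ∃ K : Finset (Fin n), G.IsNClique w K} := by
    apply Nat.sInf_mem
    refine ⟨n, fun G => ?_⟩
    rcases hn G Finset.univ (by simp) with ⟨S, _, hS⟩ | ⟨K, _, hK⟩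
    · exact Or.inl ⟨S, hS⟩
    · exact Or.inr ⟨K, hK⟩
  exact this

lemma ramsey_prop {V : Type u} (t w : ℕ) (G : SimpleGraph V) (B : Finset V)
    (hB : ramsey t w ≤ B.card) :
    (∃ S : Finset V, S ⊆ B ∧ Gᶜ.IsNClique t S) ∨
      (∃ K : Finset V, K ⊆ B ∧ G.IsNClique w K) := by
  classical
  obtain ⟨B', hB'sub, hB'card⟩ := Finset.exists_subset_card_eq hB
  let e : B' ≃ Fin (ramsey t w) := B'.equivFinOfCardEq hB'card
  let f : Fin (ramsey t w) → V := fun i => ↑(e.symm i)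
  have hfinj : Function.Injective f := fun i j h =>
    e.symm.injective (Subtype.coe_injective h)
  have hfmem : ∀ i, f i ∈ B' := fun i => (e.symm i).2
  rcases ramsey_mem' t w (G.comap f) with ⟨S, hS⟩ | ⟨K, hK⟩
  · refine Or.inl ⟨S.image f, ?_, ?_, ?_⟩
    · intro x hx
      obtain ⟨i, _, rfl⟩ := Finset.mem_image.mp hx
      exact hB'sub (hfmem i)
    · rintro x hx y hy hxy
      simp only [Finset.coe_image, Set.mem_image, Finset.mem_coe] at hx hy
      obtain ⟨i, hi, rfl⟩ := hx
      obtain ⟨j, hj, rfl⟩ := hy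
      have hij : i ≠ j := fun h => hxy (by rw [h])
      have := hS.1 hi hj hij
      rw [SimpleGraph.compl_adj] at this ⊢
      exact ⟨hxy, this.2⟩
    · rw [Finset.card_image_of_injective _ hfinj, hS.2]
  · refine Or.inr ⟨K.image f, ?_, ?_, ?_⟩
    · intro x hx
      obtain ⟨i, _, rfl⟩ := Finset.mem_image.mp hx
      exact hB'sub (hfmem i)
    · rintro x hx y hy hxy
      simp only [Finset.coe_image, Set.mem_image, Finset.mem_coe] at hx hy
      obtain ⟨i, hi, rfl⟩ := hx
      obtain ⟨j, hj, rfl⟩ := hy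
      have hij : i ≠ j := fun h => hxy (by rw [h])
      exact hK.1 hi hj hij
    · rw [Finset.card_image_of_injective _ hfinj, hK.2]

/-- If `G` is `t`-broom-free with `ω(G) ≤ w`, `(P, Q)` is an anticomplete
pair with `G[P]`, `G[Q]` connected, and `u ∉ P ∪ Q` has a neighbour in both `P` and `Q`,
then `G[P \ N_G(u)]` has degeneracy at most `2(R(t,w) − 1)`, i.e. it has no induced
subgraph of minimum degree at least `2·R(t,w) − 1`. -/
theorem stmt_12 {V : Type*} [Fintype V] (t w : ℕ) (ht : 1 ≤ t) (hw : 2 ≤ w)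
    (G : SimpleGraph V) (hfree : FreeOf G (broom 3 t))
    (hclique : G.CliqueFree (w + 1))
    (P Q : Set V) (hanti : Anticomplete G P Q)
    (hPconn : (G.induce P).Connected) (hQconn : (G.induce Q).Connected)
    (u : V) (hu : u ∉ P ∪ Q)
    (huP : ∃ p ∈ P, G.Adj u p) (huQ : ∃ q ∈ Q, G.Adj u q) :
    ∀ S : Set V, S ⊆ P \ G.neighborSet u → S.Nonempty →
      ∃ v ∈ S, (G.neighborSet v ∩ S).ncard ≤ 2 * (ramsey t w - 1) := by
  classical
  intro S hS hSne
  obtain ⟨p0, hp0P, hup0⟩ := huP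
  set GP := G.induce P with hGPdef
  have hpre := hPconn.preconnected
  have adjPV : ∀ {x y : ↥P}, GP.Adj x y ↔ G.Adj ↑x ↑y := by
    intro x y
    simp [hGPdef]
  have hSP : ∀ s ∈ S, s ∈ P := fun s hs => (hS hs).1
  have hSnu : ∀ s ∈ S, ¬ G.Adj u s := fun s hs h => (hS hs).2 h
  have huP' : u ∉ P := fun h => hu (Or.inl h)
  -- minimum distance pair
  set D : Set ℕ := {n | ∃ s q : ↥P, ↑s ∈ S ∧ G.Adj u ↑q ∧ GP.dist s q = n} with hD
  obtain ⟨s0, hs0S⟩ := hSne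
  have hDne : D.Nonempty := ⟨_, ⟨s0, hSP s0 hs0S⟩, ⟨p0, hp0P⟩, hs0S, hup0, rfl⟩
  obtain ⟨v', q', hv'S, huq', hdk⟩ := Nat.sInf_mem hDne
  set k := sInf D with hkdef
  have hmin : ∀ (s q : ↥P), ↑s ∈ S → G.Adj u ↑q → k ≤ GP.dist s q :=
    fun s q h1 h2 => Nat.sInf_le ⟨s, q, h1, h2, rfl⟩
  have hdistS : ∀ s : ↥P, ↑s ∈ S → k ≤ GP.dist s q' := fun s h1 => hmin s q' h1 huq'
  have hv'nu : ¬ G.Adj u ↑v' := hSnu _ hv'S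
  have hk1 : 1 ≤ k := by
    rcases Nat.eq_zero_or_pos k with h0 | h
    · exfalso
      have hvq : v' = q' := (hpre v' q').dist_eq_zero_iff.mp (by omega)
      exact hv'nu (hvq ▸ huq')
    · exact h
  -- first step on a shortest path
  obtain ⟨x1, hvx1, hx1r, hx1d⟩ := exists_adj_dist_pred (hpre v' q') (by omega)
  rw [hdk] at hx1d
  have hGvx1 : G.Adj ↑v' ↑x1 := adjPV.mp hvx1
  have hx1S : ↑x1 ∉ S := by
    intro h
    have := hdistS x1 h
    omega
  have hdvx1 : GP.dist v' x1 ≤ 1 := by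
    simpa using SimpleGraph.dist_le (SimpleGraph.Walk.cons hvx1 SimpleGraph.Walk.nil)
  have hx1u : 2 ≤ k → ¬ G.Adj u ↑x1 := by
    intro h2 hadj
    have := hmin v' x1 hv'S hadj
    omega
  -- the two "handle" configurations
  have hYZ : (∃ y : V, G.Adj y ↑x1 ∧ ¬ G.Adj y ↑v' ∧ y ≠ ↑v' ∧ ∀ s ∈ S, ¬ G.Adj y s ∧ y ≠ s) ∧
      (∃ z y : V, G.Adj z y ∧ G.Adj y ↑x1 ∧ ¬ G.Adj z ↑x1 ∧ z ≠ ↑x1 ∧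
        (∀ s ∈ S, ¬ G.Adj y s ∧ y ≠ s) ∧ (∀ s ∈ S, ¬ G.Adj z s ∧ z ≠ s)) := by
    have huSfacts : ∀ s ∈ S, ¬ G.Adj u s ∧ u ≠ s :=
      fun s hs => ⟨hSnu s hs, fun h => huP' (h ▸ hSP s hs)⟩
    by_cases hk2 : 2 ≤ k
    · -- x2 exists
      obtain ⟨x2, hx12, hx2r, hx2d⟩ := exists_adj_dist_pred hx1r (by omega)
      have hGx12 : G.Adj ↑x1 ↑x2 := adjPV.mp hx12
      have hx2S : ↑x2 ∉ S := by
        intro h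
        have := hdistS x2 h
        omega
      have hSx2 : ∀ s ∈ S, ¬ G.Adj ↑x2 s := by
        intro s hs hadj
        have hadj' : GP.Adj ⟨s, hSP s hs⟩ x2 := adjPV.mpr hadj.symm
        have := dist_le_one_add hadj' hx2r
        have := hdistS ⟨s, hSP s hs⟩ hs
        omega
      have hvx2 : ¬ G.Adj ↑v' ↑x2 := by
        intro hadj
        have := dist_le_one_add (adjPV.mpr hadj) hx2r
        omega
      have hx2v : (↑x2 : V) ≠ ↑v' := by
        intro h
        have : x2 = v' := Subtype.coe_injective h
        subst this
        omega
      have hx2facts : ∀ s ∈ S, ¬ G.Adj ↑x2 s ∧ (↑x2 : V) ≠ s :=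
        fun s hs => ⟨hSx2 s hs, fun h => hx2S (h ▸ hs)⟩
      refine ⟨⟨↑x2, hGx12.symm, fun h => hvx2 h.symm, hx2v, hx2facts⟩, ?_⟩
      by_cases hk3 : 3 ≤ k
      · -- x3 exists
        obtain ⟨x3, hx23, hx3r, hx3d⟩ := exists_adj_dist_pred hx2r (by omega)
        have hGx23 : G.Adj ↑x2 ↑x3 := adjPV.mp hx23
        have hx3S : ↑x3 ∉ S := by
          intro h
          have := hdistS x3 h
          omega
        have hSx3 : ∀ s ∈ S, ¬ G.Adj ↑x3 s := by
          intro s hs hadj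
          have hadj' : GP.Adj ⟨s, hSP s hs⟩ x3 := adjPV.mpr hadj.symm
          have := dist_le_one_add hadj' hx3r
          have := hdistS ⟨s, hSP s hs⟩ hs
          omega
        have hx31 : ¬ G.Adj (↑x3) ↑x1 := by
          intro hadj
          have := dist_le_one_add (adjPV.mpr hadj.symm) hx3r
          omega
        have hx3ne1 : (↑x3 : V) ≠ ↑x1 := by
          intro h
          have : x3 = x1 := Subtype.coe_injective h
          subst this
          omega
        exact ⟨↑x3, ↑x2, hGx23.symm, hGx12.symm, hx31, hx3ne1, hx2facts,
          fun s hs => ⟨hSx3 s hs, fun h => hx3S (h ▸ hs)⟩⟩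
      · -- k = 2 : x2 = q', use u
        have hx2q : x2 = q' := (hx2r).dist_eq_zero_iff.mp (by omega)
        have hux2 : G.Adj u ↑x2 := hx2q ▸ huq'
        exact ⟨u, ↑x2, hux2, hGx12.symm, hx1u hk2, fun h => huP' (h ▸ x1.2), hx2facts, huSfacts⟩
    · -- k = 1 : x1 = q', use u (and a neighbour of u in Q)
      have hx1q : x1 = q' := (hx1r).dist_eq_zero_iff.mp (by omega)
      have hux1 : G.Adj u ↑x1 := hx1q ▸ huq'
      obtain ⟨q0, hq0Q, huq0⟩ := huQ
      refine ⟨⟨u, hux1, hv'nu, fun h => huP' (h ▸ v'.2), huSfacts⟩,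
        ⟨q0, u, huq0.symm, hux1, ?_, ?_, huSfacts, ?_⟩⟩
      · exact fun h => hanti (↑x1) x1.2 q0 hq0Q h.symm
      · intro h
        exact hanti (↑v') v'.2 q0 hq0Q (h ▸ hGvx1)
      · intro s hs
        refine ⟨fun h => hanti s (hSP s hs) q0 hq0Q h.symm, fun h => hSnu s hs (h ▸ huq0)⟩
  obtain ⟨hY, hZ⟩ := hYZ
  refine ⟨↑v', hv'S, ?_⟩
  set NvS := G.neighborSet ↑v' ∩ S with hNvS
  have hclfalse : ∀ T : Finset V, (∀ x ∈ T, G.Adj ↑v' x) → ¬ G.IsNClique w T :=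
    fun T hT hK => hclique _ (hK.insert hT)
  have hSfromNvS : ∀ x ∈ NvS, x ∈ S := fun x hx => hx.2
  have hAdjfromNvS : ∀ x ∈ NvS, G.Adj ↑v' x := fun x hx => hx.1
  have hAbound : ({x ∈ NvS | G.Adj ↑x1 x}).ncard ≤ ramsey t w - 1 := by
    by_contra hcon
    set As := {x ∈ NvS | G.Adj ↑x1 x} with hAs
    have hfin : As.Finite := Set.toFinite _
    have hcard : ramsey t w ≤ hfin.toFinset.card := by
      rw [← Set.ncard_eq_toFinset_card As hfin]
      omega
    rcases ramsey_prop t w G hfin.toFinset hcard with ⟨T, hTsub, hTst⟩ | ⟨K, hKsub, hK⟩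
    · obtain ⟨z, y, hzy, hyx1, hzx1, hzne, hyS, hzS⟩ := hZ
      have hTmem : ∀ x ∈ T, x ∈ As := fun x hx => (Set.Finite.mem_toFinset hfin).mp (hTsub hx)
      have hTS : ∀ x ∈ T, x ∈ S := fun x hx => (hTmem x hx).1.2
      obtain ⟨emb⟩ := broom_embed_of G t z y (↑x1) T hTst.2 hzy hyx1 hzx1 hzne
        (fun x hx => (hzS x (hTS x hx)).1) (fun x hx => (hyS x (hTS x hx)).1)
        (fun x hx => (hTmem x hx).2)
        (fun x hx y' hy' hne hadj => by
          have := hTst.1 (Finset.mem_coe.mpr hx) (Finset.mem_coe.mpr hy') hne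
          rw [SimpleGraph.compl_adj] at this
          exact this.2 hadj)
        (fun h => (hzS z (hTS z h)).2 rfl) (fun h => (hyS y (hTS y h)).2 rfl)
        (fun h => hx1S (hTS _ h))
      exact hfree.false emb
    · exact hclfalse K (fun x hx => ((Set.Finite.mem_toFinset hfin).mp (hKsub hx)).1.1) hK
  have hBbound : ({x ∈ NvS | ¬ G.Adj ↑x1 x}).ncard ≤ ramsey t w - 1 := by
    by_contra hcon
    set Bs := {x ∈ NvS | ¬ G.Adj ↑x1 x} with hBs
    have hfin : Bs.Finite := Set.toFinite _
    have hcard : ramsey t w ≤ hfin.toFinset.card := by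
      rw [← Set.ncard_eq_toFinset_card Bs hfin]
      omega
    rcases ramsey_prop t w G hfin.toFinset hcard with ⟨T, hTsub, hTst⟩ | ⟨K, hKsub, hK⟩
    · obtain ⟨y, hyx1, hyv, hyne, hyS⟩ := hY
      have hTmem : ∀ x ∈ T, x ∈ Bs := fun x hx => (Set.Finite.mem_toFinset hfin).mp (hTsub hx)
      have hTS : ∀ x ∈ T, x ∈ S := fun x hx => (hTmem x hx).1.2
      obtain ⟨emb⟩ := broom_embed_of G t y (↑x1) (↑v') T hTst.2 hyx1 hGvx1.symm hyv hyne
        (fun x hx => (hyS x (hTS x hx)).1) (fun x hx => (hTmem x hx).2)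
        (fun x hx => (hTmem x hx).1.1)
        (fun x hx y' hy' hne hadj => by
          have := hTst.1 (Finset.mem_coe.mpr hx) (Finset.mem_coe.mpr hy') hne
          rw [SimpleGraph.compl_adj] at this
          exact this.2 hadj)
        (fun h => (hyS y (hTS y h)).2 rfl) (fun h => hx1S (hTS _ h))
        (fun h => G.irrefl (hTmem _ h).1.1)
      exact hfree.false emb
    · exact hclfalse K (fun x hx => ((Set.Finite.mem_toFinset hfin).mp (hKsub hx)).1.1) hK
  have hunion : NvS ⊆ {x ∈ NvS | G.Adj ↑x1 x} ∪ {x ∈ NvS | ¬ G.Adj ↑x1 x} := by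
    intro x hx
    by_cases h : G.Adj ↑x1 x
    · exact Or.inl ⟨hx, h⟩
    · exact Or.inr ⟨hx, h⟩
  calc NvS.ncard ≤ ({x ∈ NvS | G.Adj ↑x1 x} ∪ {x ∈ NvS | ¬ G.Adj ↑x1 x}).ncard :=
        Set.ncard_le_ncard hunion (Set.toFinite _)
    _ ≤ ({x ∈ NvS | G.Adj ↑x1 x}).ncard + ({x ∈ NvS | ¬ G.Adj ↑x1 x}).ncard :=
        Set.ncard_union_le _ _
    _ ≤ 2 * (ramsey t w - 1) := by omega
end
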